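/- Let q be a real number with q ≠ 1 and let G_K(t) = sinh((1−q)t)/(1−q) be the Kaniadakis group exponential. Under the same hypotheses as in the Fisher metric group theorem (p : ℝ^m → X → ℝ a positive parametrized family of probability densities, differentiation under the integral sign valid up to second order at θ₀ for A(θ) = ∫_X p(θ)(x) G_K(ln(p(θ)(x)/p(θ₀)(x))) dμ, and ∫_X ∂_j p(θ₀) dμ = 0 = ∫_X ∂_j ∂_k p(θ₀) dμ), the Hessian entry ∂_j ∂_k A(θ₀) equals the standard Fisher information matrix entry g_{jk}(θ₀); in particular G_K'(0) = 1 and G_K''(0) = 0, so the Kaniadakis class recovers exactly the ordinary Fisher metric. -/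

import Mathlib

open MeasureTheory Real Filter Function Topology

/-! With `ℓ = log (p θ / p θ₀)`, the `k`-th partial derivative of `p · G(ℓ)` is
`∂_k p · (G ℓ + G' ℓ)`. Differentiating once more in direction `j` at `θ₀`, where `ℓ = 0`,
gives `(G 0 + G' 0) ∂_j ∂_k p + (G' 0 + G'' 0) p (∂_j p / p) (∂_k p / p)`, and the first term
integrates to zero. For the Kaniadakis exponential `G 0 = 0`, `G' 0 = cosh 0 = 1` and
`G'' 0 = 0`, so the Hessian is exactly the Fisher information. -/

theorem hasDerivAt_sinh_mul_div {κ : ℝ} (hκ : κ ≠ 0) (t : ℝ) :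
    HasDerivAt (fun u => sinh (κ * u) / κ) (cosh (κ * t)) t := by
  refine (((hasDerivAt_id t).const_mul κ).sinh.div_const κ).congr_deriv ?_
  field_simp
  simp

theorem hasDerivAt_cosh_mul (κ t : ℝ) :
    HasDerivAt (fun u => cosh (κ * u)) (sinh (κ * t) * κ) t := by
  simpa using ((hasDerivAt_id t).const_mul κ).cosh

theorem HasDerivAt.mul_comp_log_div {G f : ℝ → ℝ} {f' t c G'ℓ : ℝ}
    (hf : HasDerivAt f f' t) (hft : f t ≠ 0) (hc : c ≠ 0)
    (hG : HasDerivAt G G'ℓ (Real.log (f t / c))) :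
    HasDerivAt (fun u => f u * G (Real.log (f u / c))) (f' * (G (Real.log (f t / c)) + G'ℓ)) t := by
  have hlog := (hf.div_const c).log (div_ne_zero hft hc)
  refine (hf.mul (hG.comp t hlog)).congr_deriv ?_
  simp only [comp_apply]
  field_simp

theorem HasDerivAt.mul_add_comp_log_div_self {G G' g f : ℝ → ℝ} {g' f' G'' t : ℝ}
    (hg : HasDerivAt g g' t) (hf : HasDerivAt f f' t) (hft : f t ≠ 0)
    (hG : HasDerivAt G (G' 0) 0) (hG' : HasDerivAt G' G'' 0) :
    HasDerivAt (fun u => g u * (G (Real.log (f u / f t)) + G' (Real.log (f u / f t))))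
      (g' * (G 0 + G' 0) + g t * ((G' 0 + G'') * (f' / f t))) t := by
  have hlog : HasDerivAt (fun u => Real.log (f u / f t)) (f' / f t) t := by
    refine ((hf.div_const (f t)).log (by simp [hft])).congr_deriv ?_
    simp [hft]
  have hlog_self : Real.log (f t / f t) = 0 := by simp [hft]
  have hsum := (hG.comp_of_eq t hlog hlog_self.symm).add (hG'.comp_of_eq t hlog hlog_self.symm)
  refine (hg.mul hsum).congr_deriv ?_
  simp only [Pi.add_apply, comp_apply, hlog_self]
  ring

theorem second_partial_relEntropy_integrand_eq {ι : Type*} [DecidableEq ι]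
    {F : (ι → ℝ) → ℝ} {F₁ : ι → (ι → ℝ) → ℝ} {θ₀ : ι → ℝ} {j k : ι} {F₂ : ℝ}
    {G G' : ℝ → ℝ} {G'' : ℝ} {Q₁ : ℝ → ℝ} {Q₂ : ℝ}
    (hG : ∀ t, HasDerivAt G (G' t) t) (hG' : HasDerivAt G' G'' 0) (hF₀ : F θ₀ ≠ 0)
    (hFj : HasDerivAt (fun s => F (update θ₀ j s)) (F₁ j θ₀) (θ₀ j))
    (hFk : ∀ s, HasDerivAt (fun t => F (update (update θ₀ j s) k t))
      (F₁ k (update θ₀ j s)) (update θ₀ j s k))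
    (hF₂ : HasDerivAt (fun s => F₁ k (update θ₀ j s)) F₂ (θ₀ j))
    (hQ₁ : ∀ s, HasDerivAt (fun t => F (update (update θ₀ j s) k t) *
        G (Real.log (F (update (update θ₀ j s) k t) / F θ₀))) (Q₁ s) (update θ₀ j s k))
    (hQ₂ : HasDerivAt Q₁ Q₂ (θ₀ j)) :
    Q₂ = (G 0 + G' 0) * F₂ +
      (G' 0 + G'') * (F θ₀ * ((F₁ j θ₀ / F θ₀) * (F₁ k θ₀ / F θ₀))) := by
  have hQ₁_eq : Q₁ =ᶠ[𝓝 (θ₀ j)] fun s => F₁ k (update θ₀ j s) *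
      (G (Real.log (F (update θ₀ j s) / F θ₀)) + G' (Real.log (F (update θ₀ j s) / F θ₀))) := by
    have hne : ∀ᶠ s in 𝓝 (θ₀ j), F (update θ₀ j s) ≠ 0 :=
      hFj.continuousAt.eventually_ne (by simpa using hF₀)
    filter_upwards [hne] with s hs
    have h := (hFk s).mul_comp_log_div (by simpa using hs) hF₀ (hG _)
    simpa using (hQ₁ s).unique h
  have h := hF₂.mul_add_comp_log_div_self hFj (by simpa using hF₀) (hG 0) hG'
  simp only [update_eq_self] at h
  rw [hQ₂.unique (h.congr_of_eventuallyEq hQ₁_eq)]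
  field_simp

theorem fisher_metric_group_kaniadakis_general
    {X : Type*} [MeasurableSpace X] (μ : Measure X) {m : ℕ}
    (q : ℝ) (hq : q ≠ 1) (G : ℝ → ℝ)
    (hG : ∀ t, G t = Real.sinh ((1 - q) * t) / (1 - q))
    (p : (Fin m → ℝ) → X → ℝ)
    -- `p` is a parametrized family of probability densities
    (hppos : ∀ θ : Fin m → ℝ, ∀ᵐ x ∂μ, 0 < p θ x)
    (θ₀ : Fin m → ℝ) (j k : Fin m)
    -- for μ-a.e. x, the map θ ↦ p θ x has first partial derivatives `p₁ i θ x` ...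
    (p₁ : Fin m → (Fin m → ℝ) → X → ℝ)
    (hp₁ : ∀ᵐ x ∂μ, ∀ (i : Fin m) (θ : Fin m → ℝ),
      HasDerivAt (fun s => p (Function.update θ i s) x) (p₁ i θ x) (θ i))
    -- ... and the mixed second partial derivative `∂_j ∂_k p = p₂` at θ₀
    (p₂ : X → ℝ)
    (hp₂ : ∀ᵐ x ∂μ, HasDerivAt (fun s => p₁ k (Function.update θ₀ j s) x) (p₂ x) (θ₀ j))
    -- `A θ = D_G(p θ ‖ p θ₀)`, and `dA = ∂_k A` along the j-line through θ₀
    (dA : (Fin m → ℝ) → ℝ)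
    -- differentiation under the integral sign is valid to first order ...
    (q₁ : ℝ → X → ℝ)
    (hq₁ : ∀ᵐ x ∂μ, ∀ s : ℝ, HasDerivAt
      (fun t => p (Function.update (Function.update θ₀ j s) k t) x *
        G (Real.log (p (Function.update (Function.update θ₀ j s) k t) x / p θ₀ x)))
      (q₁ s x) (Function.update θ₀ j s k))
    (hDUI₁ : ∀ s : ℝ, dA (Function.update θ₀ j s) = ∫ x, q₁ s x ∂μ)
    -- ... and to second order at θ₀
    (q₂ : X → ℝ)
    (hq₂ : ∀ᵐ x ∂μ, HasDerivAt (fun s => q₁ s x) (q₂ x) (θ₀ j))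
    (hDUI₂ : HasDerivAt (fun s => ∫ x, q₁ s x ∂μ) (∫ x, q₂ x ∂μ) (θ₀ j))
    -- the integrals of the derivatives of `p` vanish at θ₀
    (hvan₂ : ∫ x, p₂ x ∂μ = 0)
    -- (integrability of the pieces)
    (hint₂ : Integrable p₂ μ)
    (hfish : Integrable
      (fun x => p θ₀ x * ((p₁ j θ₀ x / p θ₀ x) * (p₁ k θ₀ x / p θ₀ x))) μ) :
    deriv G 0 = 1 ∧ deriv (deriv G) 0 = 0 ∧
    HasDerivAt (fun s => dA (Function.update θ₀ j s))
      ((1 : ℝ) *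
        ∫ x, p θ₀ x * ((p₁ j θ₀ x / p θ₀ x) * (p₁ k θ₀ x / p θ₀ x)) ∂μ)
      (θ₀ j) := by
  have hκ : (1 : ℝ) - q ≠ 0 := sub_ne_zero.mpr (Ne.symm hq)
  have hG' : ∀ t, HasDerivAt G (cosh ((1 - q) * t)) t :=
    funext hG ▸ hasDerivAt_sinh_mul_div hκ
  have hG'' : HasDerivAt (fun t => cosh ((1 - q) * t)) 0 0 := by
    simpa using hasDerivAt_cosh_mul (1 - q) 0
  have hq₂_eq : ∀ᵐ x ∂μ,
      q₂ x = p₂ x + p θ₀ x * ((p₁ j θ₀ x / p θ₀ x) * (p₁ k θ₀ x / p θ₀ x)) := by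
    filter_upwards [hp₁, hp₂, hppos θ₀, hq₁, hq₂] with x hx₁ hx₂ hx₀ hxq₁ hxq₂
    simpa [hG] using second_partial_relEntropy_integrand_eq (F := fun θ => p θ x)
      (F₁ := fun i θ => p₁ i θ x)
      hG' hG'' hx₀.ne' (hx₁ j θ₀) (fun s => hx₁ k _) hx₂ hxq₁ hxq₂
  have hintegral_q₂ : ∫ x, q₂ x ∂μ =
      ∫ x, p θ₀ x * ((p₁ j θ₀ x / p θ₀ x) * (p₁ k θ₀ x / p θ₀ x)) ∂μ := by
    rw [integral_congr_ae hq₂_eq, integral_add hint₂ hfish, hvan₂, zero_add]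
  have hderivG : deriv G = fun t => cosh ((1 - q) * t) := funext fun t => (hG' t).deriv
  refine ⟨by simpa using (hG' 0).deriv, by simpa [hderivG] using hG''.deriv, ?_⟩
  simpa only [hDUI₁, one_mul, hintegral_q₂] using hDUI₂

/-- (Fisher metric group, Kaniadakis class.) For the Kaniadakis group
exponential `G_K(t) = sinh((1-q)t)/(1-q)` with `q ≠ 1`, one has `G_K'(0) = 1`,
`G_K''(0) = 0`, and the Hessian at `θ = θ₀` of
`A(θ) = ∫ p(θ)(x) · G_K(ln (p(θ)(x)/p(θ₀)(x))) dμ` equals the standard Fisher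
information matrix entry `g_{jk}(θ₀)`: the Kaniadakis class recovers exactly the
ordinary Fisher metric.

Here `p₁ i θ x` is the `i`-th first partial derivative of `θ ↦ p θ x`, `p₂` is the
mixed second partial `∂_j ∂_k p` at `θ₀`, `dA` is the partial derivative of `A` in
the `k`-th direction (along the `j`-line through `θ₀`), and the hypotheses
`hq₁, hDUI₁, hq₂, hDUI₂` express that differentiation under the integral sign is
valid up to second order at `θ₀`. -/
theorem fisher_metric_group_kaniadakis
    {X : Type*} [MeasurableSpace X] (μ : Measure X) {m : ℕ}
    (q : ℝ) (hq : q ≠ 1) (G : ℝ → ℝ)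
    (hG : ∀ t, G t = Real.sinh ((1 - q) * t) / (1 - q))
    (p : (Fin m → ℝ) → X → ℝ)
    -- `p` is a parametrized family of probability densities
    (hppos : ∀ θ : Fin m → ℝ, ∀ᵐ x ∂μ, 0 < p θ x)
    (hpone : ∀ θ : Fin m → ℝ, ∫ x, p θ x ∂μ = 1)
    (θ₀ : Fin m → ℝ) (j k : Fin m)
    -- for μ-a.e. x, the map θ ↦ p θ x has first partial derivatives `p₁ i θ x` ...
    (p₁ : Fin m → (Fin m → ℝ) → X → ℝ)
    (hp₁ : ∀ᵐ x ∂μ, ∀ (i : Fin m) (θ : Fin m → ℝ),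
      HasDerivAt (fun s => p (Function.update θ i s) x) (p₁ i θ x) (θ i))
    -- ... and the mixed second partial derivative `∂_j ∂_k p = p₂` at θ₀
    (p₂ : X → ℝ)
    (hp₂ : ∀ᵐ x ∂μ, HasDerivAt (fun s => p₁ k (Function.update θ₀ j s) x) (p₂ x) (θ₀ j))
    -- `A θ = D_G(p θ ‖ p θ₀)`, and `dA = ∂_k A` along the j-line through θ₀
    (A dA : (Fin m → ℝ) → ℝ)
    (hA : ∀ θ, A θ = ∫ x, p θ x * G (Real.log (p θ x / p θ₀ x)) ∂μ)
    (hdA : ∀ s : ℝ, HasDerivAt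
      (fun t => A (Function.update (Function.update θ₀ j s) k t))
      (dA (Function.update θ₀ j s)) (Function.update θ₀ j s k))
    -- differentiation under the integral sign is valid to first order ...
    (q₁ : ℝ → X → ℝ)
    (hq₁ : ∀ᵐ x ∂μ, ∀ s : ℝ, HasDerivAt
      (fun t => p (Function.update (Function.update θ₀ j s) k t) x *
        G (Real.log (p (Function.update (Function.update θ₀ j s) k t) x / p θ₀ x)))
      (q₁ s x) (Function.update θ₀ j s k))
    (hDUI₁ : ∀ s : ℝ, dA (Function.update θ₀ j s) = ∫ x, q₁ s x ∂μ)
    -- ... and to second order at θ₀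
    (q₂ : X → ℝ)
    (hq₂ : ∀ᵐ x ∂μ, HasDerivAt (fun s => q₁ s x) (q₂ x) (θ₀ j))
    (hDUI₂ : HasDerivAt (fun s => ∫ x, q₁ s x ∂μ) (∫ x, q₂ x ∂μ) (θ₀ j))
    -- the integrals of the derivatives of `p` vanish at θ₀
    (hvan₁ : ∫ x, p₁ j θ₀ x ∂μ = 0)
    (hvan₂ : ∫ x, p₂ x ∂μ = 0)
    -- (integrability of the pieces)
    (hint₂ : Integrable p₂ μ)
    (hfish : Integrable
      (fun x => p θ₀ x * ((p₁ j θ₀ x / p θ₀ x) * (p₁ k θ₀ x / p θ₀ x))) μ) :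
    deriv G 0 = 1 ∧ deriv (deriv G) 0 = 0 ∧
    HasDerivAt (fun s => dA (Function.update θ₀ j s))
      ((1 : ℝ) *
        ∫ x, p θ₀ x * ((p₁ j θ₀ x / p θ₀ x) * (p₁ k θ₀ x / p θ₀ x)) ∂μ)
      (θ₀ j) :=
  fisher_metric_group_kaniadakis_general μ q hq G hG p hppos θ₀ j k p₁ hp₁ p₂ hp₂ dA q₁ hq₁ hDUI₁ q₂
    hq₂ hDUI₂ hvan₂ hint₂ hfish
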